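/- Let S and T be countable sets, I : S → T a k-to-1 map (k ≥ 1), f : S → ℝ≥0 and g : T → ℝ≥0 functions, n ≥ 1, and d ≥ 0 a constant such that |g(I(s)) − 2 f(s)| ≤ d for all s ∈ S. If lim_{L→∞} #{t ∈ I(S) | g(t) ≤ L}/L^n = A, then lim_{L→∞} #{s ∈ S | f(s) ≤ L}/L^n = k · 2^n · A. -/

import Mathlib

open Filter

lemma preimage_finite_of_finite {S T : Type*} (I : S → T) (k : ℕ)
    (hfib : ∀ t ∈ Set.range I, (I ⁻¹' {t}).encard = k)
    {B : Set T} (hB : B.Finite) : (I ⁻¹' B).Finite := by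
  rw [← Set.biUnion_preimage_singleton]
  refine hB.biUnion (fun t ht => ?_)
  by_cases h : t ∈ Set.range I
  · exact Set.finite_of_encard_eq_coe (hfib t h)
  · convert Set.finite_empty
    ext s; simp only [Set.mem_preimage, Set.mem_singleton_iff, Set.mem_empty_iff_false,
      iff_false]
    rintro rfl; exact h ⟨s, rfl⟩

lemma preimage_ncard_eq {S T : Type*} (I : S → T) (k : ℕ)
    (hfib : ∀ t ∈ Set.range I, (I ⁻¹' {t}).encard = k)
    {B : Set T} (hB : B.Finite) (hBr : B ⊆ Set.range I) :
    (I ⁻¹' B).ncard = k * B.ncard := by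
  refine Set.Finite.induction_on
    (motive := fun B _ => B ⊆ Set.range I → (I ⁻¹' B).ncard = k * B.ncard) B hB
    (fun _ => by simp) ?_ hBr
  intro t B htB hBfin ih hins
  · have hsub : B ⊆ Set.range I := fun x hx => hins (Set.mem_insert_of_mem _ hx)
    have ht : t ∈ Set.range I := hins (Set.mem_insert _ _)
    have hpre : I ⁻¹' insert t B = I ⁻¹' {t} ∪ I ⁻¹' B := by
      rw [Set.insert_eq, Set.preimage_union]
    have hdisj : Disjoint (I ⁻¹' {t}) (I ⁻¹' B) :=
      (Set.disjoint_singleton_left.mpr htB).preimage I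
    have hf1 : (I ⁻¹' {t}).Finite := Set.finite_of_encard_eq_coe (hfib t ht)
    have hf2 : (I ⁻¹' B).Finite := preimage_finite_of_finite I k hfib hBfin
    have hk' : (I ⁻¹' {t}).ncard = k := by
      rw [Set.ncard_def, hfib t ht, ENat.toNat_coe]
    rw [hpre, Set.ncard_union_eq hdisj hf1 hf2, ih hsub, hk',
      Set.ncard_insert_of_notMem htB hBfin]
    ring

theorem arc_count_from_curve_count
    {S T : Type*} [Countable S] [Countable T]
    (I : S → T) (k : ℕ) (hk : 1 ≤ k)
    (hfib : ∀ t ∈ Set.range I, (I ⁻¹' {t}).encard = k)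
    (f : S → NNReal) (g : T → NNReal)
    (n : ℕ) (hn : 1 ≤ n) (d : ℝ) (hd : 0 ≤ d)
    (hclose : ∀ s : S, |(g (I s) : ℝ) - 2 * (f s : ℝ)| ≤ d)
    (hfinT : ∀ L : ℝ, {t ∈ Set.range I | (g t : ℝ) ≤ L}.Finite)
    (hfinS : ∀ L : ℝ, {s : S | (f s : ℝ) ≤ L}.Finite)
    (A : ℝ)
    (hA : Tendsto (fun L : ℝ =>
        ({t ∈ Set.range I | (g t : ℝ) ≤ L}.ncard : ℝ) / L ^ n) atTop (nhds A)) :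
    Tendsto (fun L : ℝ =>
        ({s : S | (f s : ℝ) ≤ L}.ncard : ℝ) / L ^ n) atTop
      (nhds ((k : ℝ) * 2 ^ n * A)) := by
  set NT : ℝ → ℝ := fun M => ({t ∈ Set.range I | (g t : ℝ) ≤ M}.ncard : ℝ) with hNT
  set NS : ℝ → ℝ := fun L => ({s : S | (f s : ℝ) ≤ L}.ncard : ℝ) with hNS
  -- counting s with g (I s) ≤ M
  have hcount : ∀ M : ℝ, ({s : S | (g (I s) : ℝ) ≤ M}.ncard : ℝ) = (k : ℝ) * NT M := by
    intro M
    have hset : {s : S | (g (I s) : ℝ) ≤ M} = I ⁻¹' {t ∈ Set.range I | (g t : ℝ) ≤ M} := by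
      ext s; simp [Set.mem_preimage]
    rw [hset, preimage_ncard_eq I k hfib (hfinT M) (fun t ht => ht.1)]
    push_cast; rfl
  -- inclusions
  have hGfin : ∀ M : ℝ, {s : S | (g (I s) : ℝ) ≤ M}.Finite := by
    intro M
    have hset : {s : S | (g (I s) : ℝ) ≤ M} = I ⁻¹' {t ∈ Set.range I | (g t : ℝ) ≤ M} := by
      ext s; simp [Set.mem_preimage]
    rw [hset]; exact preimage_finite_of_finite I k hfib (hfinT M)
  have hlow : ∀ L : ℝ, (k : ℝ) * NT (2 * L - d) ≤ NS L := by
    intro L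
    rw [← hcount]
    have hsub : {s : S | (g (I s) : ℝ) ≤ 2 * L - d} ⊆ {s : S | (f s : ℝ) ≤ L} := by
      intro s hs
      have := abs_le.mp (hclose s)
      simp only [Set.mem_setOf_eq] at hs ⊢
      linarith [this.1]
    exact_mod_cast Nat.cast_le.mpr (Set.ncard_le_ncard hsub (hfinS L))
  have hhigh : ∀ L : ℝ, NS L ≤ (k : ℝ) * NT (2 * L + d) := by
    intro L
    rw [← hcount]
    have hsub : {s : S | (f s : ℝ) ≤ L} ⊆ {s : S | (g (I s) : ℝ) ≤ 2 * L + d} := by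
      intro s hs
      have := abs_le.mp (hclose s)
      simp only [Set.mem_setOf_eq] at hs ⊢
      linarith [this.2]
    exact_mod_cast Nat.cast_le.mpr (Set.ncard_le_ncard hsub (hGfin (2 * L + d)))
  -- limits of the bounding functions
  have hratio : ∀ c : ℝ, Tendsto (fun L : ℝ => (2 * L + c) / L) atTop (nhds 2) := by
    intro c
    have h1 : Tendsto (fun L : ℝ => 2 + c * L⁻¹) atTop (nhds 2) := by
      have := tendsto_inv_atTop_zero (𝕜 := ℝ)
      have h2 := this.const_mul c
      simpa using tendsto_const_nhds.add h2
    refine h1.congr' ?_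
    filter_upwards [eventually_gt_atTop (0 : ℝ)] with L hL
    field_simp
  have hMlim : ∀ c : ℝ, Tendsto (fun L : ℝ => 2 * L + c) atTop atTop := by
    intro c
    exact (tendsto_id.const_mul_atTop (by norm_num : (0:ℝ) < 2)).atTop_add tendsto_const_nhds
  have hbound : ∀ c : ℝ, Tendsto (fun L : ℝ => (k : ℝ) * NT (2 * L + c) / L ^ n)
      atTop (nhds ((k : ℝ) * 2 ^ n * A)) := by
    intro c
    have h1 : Tendsto (fun L : ℝ => NT (2 * L + c) / (2 * L + c) ^ n) atTop (nhds A) :=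
      hA.comp (hMlim c)
    have h2 : Tendsto (fun L : ℝ => ((2 * L + c) / L) ^ n) atTop (nhds (2 ^ n)) :=
      (hratio c).pow n
    have h3 := ((h1.const_mul (k : ℝ)).mul h2)
    have h4 : (k : ℝ) * A * 2 ^ n = (k : ℝ) * 2 ^ n * A := by ring
    rw [h4] at h3
    refine h3.congr' ?_
    filter_upwards [eventually_gt_atTop (max 0 (-c))] with L hL
    have hL0 : 0 < L := lt_of_le_of_lt (le_max_left _ _) hL
    have hM0 : 0 < 2 * L + c := by
      have := lt_of_le_of_lt (le_max_right 0 (-c)) hL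
      linarith
    field_simp
    rw [div_pow, mul_assoc, div_mul_cancel₀ _ (pow_ne_zero n hL0.ne')]
  -- squeeze
  have hlowlim : Tendsto (fun L : ℝ => (k : ℝ) * NT (2 * L - d) / L ^ n)
      atTop (nhds ((k : ℝ) * 2 ^ n * A)) := by
    have := hbound (-d)
    refine this.congr (fun L => ?_)
    ring_nf
  refine tendsto_of_tendsto_of_tendsto_of_le_of_le' hlowlim (hbound d) ?_ ?_
  · filter_upwards [eventually_gt_atTop (0 : ℝ)] with L hL
    have hLn : (0 : ℝ) < L ^ n := pow_pos hL n
    gcongr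
    exact hlow L
  · filter_upwards [eventually_gt_atTop (0 : ℝ)] with L hL
    have hLn : (0 : ℝ) < L ^ n := pow_pos hL n
    gcongr
    exact hhigh L
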